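/- Let R and S be commutative rings, π : R → S a surjective ring homomorphism, e ∈ R a non-zero-divisor with ker(π) equal to the principal ideal (e), and c : R → S[[y]] an injective ring homomorphism into the power series ring such that c(e) = y and the constant coefficient of c(r) equals π(r) for all r ∈ R. If x ∈ R is such that c(x) has all coefficients of y^i for i < k equal to zero and coefficient of y^k equal to λ ∈ S, then there exists a unique q ∈ R with x = e^k · q, and moreover π(q) = λ. -/

import Mathlib

/-!
Since `c e = X`, the vanishing of the constant coefficient of `c r` forces `e ∣ r`, and
dividing by `e` shifts the coefficients of `c r` down by one; by induction the `k` vanishing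
low coefficients of `c x` give `x = e ^ k * q`. Then `c x = X ^ k * c q`, so the `k`-th
coefficient of `c x` is the constant coefficient of `c q`, namely `π q`. Uniqueness of `q`
holds because `e ^ k` is a non-zero-divisor.
-/

open PowerSeries

section

variable {R S : Type*} [CommRing R] [CommRing S] (c : R →+* S⟦X⟧) {e : R}

theorem pow_dvd_of_coeff_map_eq_zero (hce : c e = X)
    (hdvd : ∀ r, constantCoeff (c r) = 0 → e ∣ r) :
    ∀ (k : ℕ) (x : R), (∀ i < k, coeff i (c x) = 0) → e ^ k ∣ x
  | 0, _, _ => by simp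
  | k + 1, x, hlow => by
    obtain ⟨y, rfl⟩ := hdvd x (by simpa using hlow 0 k.succ_pos)
    have hy : ∀ i < k, coeff i (c y) = 0 := fun i hi => by
      simpa [hce, coeff_succ_X_mul] using hlow (i + 1) (by omega)
    simpa [pow_succ'] using mul_dvd_mul_left e (pow_dvd_of_coeff_map_eq_zero hce hdvd k y hy)

theorem coeff_map_pow_mul (hce : c e = X) (k : ℕ) (q : R) :
    coeff k (c (e ^ k * q)) = constantCoeff (c q) := by
  simpa [hce] using coeff_X_pow_mul (c q) k 0

end

theorem stmt4_general {R S : Type*} [CommRing R] [CommRing S] (π : R →+* S)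
    (e : R) (he : e ∈ nonZeroDivisors R)
    (hker : RingHom.ker π = Ideal.span {e})
    (c : R →+* PowerSeries S)
    (hce : c e = PowerSeries.X)
    (hconst : ∀ r : R, PowerSeries.constantCoeff (c r) = π r)
    (x : R) (k : ℕ) (lam : S)
    (hlow : ∀ i < k, PowerSeries.coeff i (c x) = 0)
    (hlead : PowerSeries.coeff k (c x) = lam) :
    (∃! q : R, x = e ^ k * q) ∧ ∀ q : R, x = e ^ k * q → π q = lam := by
  have hdvd : ∀ r, constantCoeff (c r) = 0 → e ∣ r := fun r hr => by
    rw [← Ideal.mem_span_singleton, ← hker, RingHom.mem_ker, ← hconst, hr]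
  obtain ⟨q, hq⟩ := pow_dvd_of_coeff_map_eq_zero c hce hdvd k x hlow
  have hek : e ^ k ∈ nonZeroDivisors R := pow_mem he k
  refine ⟨⟨q, hq, fun q' hq' => ?_⟩, fun q' hq' => ?_⟩
  · exact (mul_cancel_left_mem_nonZeroDivisors hek).mp (hq' ▸ hq)
  · rw [← hconst, ← coeff_map_pow_mul c hce, ← hq', hlead]

/-- Let `π : R → S` be surjective with kernel the principal ideal generated by a
non-zero-divisor `e`, and let `c : R → S[[y]]` be an injective ring homomorphism with
`c e = y` and constant coefficient of `c r` equal to `π r`. If `c x` has vanishing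
coefficients below degree `k` and coefficient `λ` in degree `k`, then `x` is uniquely
divisible by `e^k` and the quotient maps to `λ` under `π`. -/
theorem stmt4 {R S : Type*} [CommRing R] [CommRing S] (π : R →+* S)
    (hsurj : Function.Surjective π) (e : R) (he : e ∈ nonZeroDivisors R)
    (hker : RingHom.ker π = Ideal.span {e})
    (c : R →+* PowerSeries S) (hc : Function.Injective c)
    (hce : c e = PowerSeries.X)
    (hconst : ∀ r : R, PowerSeries.constantCoeff (c r) = π r)
    (x : R) (k : ℕ) (lam : S)
    (hlow : ∀ i < k, PowerSeries.coeff i (c x) = 0)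
    (hlead : PowerSeries.coeff k (c x) = lam) :
    (∃! q : R, x = e ^ k * q) ∧ ∀ q : R, x = e ^ k * q → π q = lam :=
  stmt4_general π e he hker c hce hconst x k lam hlow hlead
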